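/- Let (V, w) be an irreducible Whittaker module for U_q(f_m(K)) admitting a central character. Then the set {K^i w : i ∈ Z} is a C-basis of V. -/

import Mathlib

noncomputable section

inductive UqGen : Type
  | E : UqGen
  | F : UqGen
  | K : UqGen
  | Kinv : UqGen

def lpow {A : Type*} [Monoid A] (x xinv : A) (n : ℤ) : A :=
  if 0 ≤ n then x ^ n.toNat else xinv ^ (-n).toNat

open FreeAlgebra in
inductive UqRel (q : ℂ) (m : ℕ) : FreeAlgebra ℂ UqGen → FreeAlgebra ℂ UqGen → Prop
  | KE : UqRel q m (ι ℂ UqGen.K * ι ℂ UqGen.E) (q ^ 2 • (ι ℂ UqGen.E * ι ℂ UqGen.K))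
  | KF : UqRel q m (ι ℂ UqGen.K * ι ℂ UqGen.F) ((q ^ 2)⁻¹ • (ι ℂ UqGen.F * ι ℂ UqGen.K))
  | KKinv : UqRel q m (ι ℂ UqGen.K * ι ℂ UqGen.Kinv) 1
  | KinvK : UqRel q m (ι ℂ UqGen.Kinv * ι ℂ UqGen.K) 1
  | EF : UqRel q m (ι ℂ UqGen.E * ι ℂ UqGen.F - ι ℂ UqGen.F * ι ℂ UqGen.E)
      ((q - q⁻¹)⁻¹ • ((ι ℂ UqGen.K) ^ m - (ι ℂ UqGen.Kinv) ^ m))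

abbrev Uq (q : ℂ) (m : ℕ) : Type := RingQuot (UqRel q m)

def Egen (q : ℂ) (m : ℕ) : Uq q m := RingQuot.mkAlgHom ℂ (UqRel q m) (FreeAlgebra.ι ℂ UqGen.E)
def Fgen (q : ℂ) (m : ℕ) : Uq q m := RingQuot.mkAlgHom ℂ (UqRel q m) (FreeAlgebra.ι ℂ UqGen.F)
def Kgen (q : ℂ) (m : ℕ) : Uq q m := RingQuot.mkAlgHom ℂ (UqRel q m) (FreeAlgebra.ι ℂ UqGen.K)
def Kinvgen (q : ℂ) (m : ℕ) : Uq q m := RingQuot.mkAlgHom ℂ (UqRel q m) (FreeAlgebra.ι ℂ UqGen.Kinv)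

def Kzpow (q : ℂ) (m : ℕ) (n : ℤ) : Uq q m := lpow (Kgen q m) (Kinvgen q m) n

def Casimir (q : ℂ) (m : ℕ) : Uq q m :=
  Fgen q m * Egen q m +
    (((q ^ (2 * m) - 1) * (q - q⁻¹))⁻¹ * q ^ (2 * m)) • Kgen q m ^ m +
    ((q ^ (2 * m) - 1) * (q - q⁻¹))⁻¹ • Kinvgen q m ^ m


/-!
Since `K E = q² E K`, each `K^i w` is an eigenvector of `E` with eigenvalue `e q^(-2i)`. These
eigenvalues are pairwise distinct because `e ≠ 0` and `q` is not a root of unity, so the family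
`(K^i w)` is linearly independent. Its span contains `w` and is stable under `K^{±1}` and `E`,
and also under `F`: the central character gives `Ω w = χ w`, which expresses `e F w` through
`w`, `K^m w` and `K^(-m) w`, and `F K^i = q^(2i) K^i F`. Since `E, F, K, K⁻¹` generate the algebra
and `w` is cyclic, the span is all of `V`.
-/

theorem injective_zpow_of_pow_ne_one {G₀ : Type*} [GroupWithZero G₀] {a : G₀} (ha : a ≠ 0)
    (h : ∀ k : ℕ, 0 < k → a ^ k ≠ 1) : Function.Injective fun n : ℤ => a ^ n := by
  have hu : ¬IsOfFinOrder (Units.mk0 a ha) := by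
    rw [isOfFinOrder_iff_pow_eq_one]
    rintro ⟨k, hk, hk1⟩
    exact h k hk (by simpa [Units.ext_iff] using hk1)
  intro i j hij
  exact injective_zpow_iff_not_isOfFinOrder.mpr hu (Units.ext (by simpa using hij))

theorem Units.mul_zpow_eq_smul_zpow_mul {K A : Type*} [Field K] [Ring A] [Algebra K A]
    {u : Aˣ} {x : A} {c : K} (hc : c ≠ 0) (h : x * u = c • (u * x)) (n : ℤ) :
    x * ↑(u ^ n) = c ^ n • (↑(u ^ n) * x) := by
  have h_inv : x * ↑u⁻¹ = c⁻¹ • (↑u⁻¹ * x) := by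
    calc x * ↑u⁻¹ = c⁻¹ • (↑u⁻¹ * (c • (u * x)) * ↑u⁻¹) := by
          rw [mul_smul_comm, smul_mul_assoc, smul_smul, inv_mul_cancel₀ hc, one_smul,
            ← mul_assoc, Units.inv_mul, one_mul]
      _ = c⁻¹ • (↑u⁻¹ * x) := by
          rw [← h, ← mul_assoc, Units.mul_inv_cancel_right]
  induction n using Int.induction_on with
  | zero => simp
  | succ n ih =>
    rw [zpow_add_one, Units.val_mul, ← mul_assoc, ih, smul_mul_assoc, mul_assoc, h,
      mul_smul_comm, smul_smul, ← mul_assoc, zpow_add_one₀ hc]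
  | pred n ih =>
    rw [zpow_sub_one, Units.val_mul, ← mul_assoc, ih, smul_mul_assoc, mul_assoc, h_inv,
      mul_smul_comm, smul_smul, ← mul_assoc, zpow_sub_one₀ hc]

theorem Submodule.smul_mem_of_adjoin_eq_top {R A M : Type*} [CommSemiring R] [Semiring A]
    [Algebra R A] [AddCommMonoid M] [Module R M] [Module A M] [IsScalarTower R A M]
    {s : Set A} (hs : Algebra.adjoin R s = ⊤) (W : Submodule R M)
    (hW : ∀ a ∈ s, ∀ v ∈ W, a • v ∈ W) (a : A) {v : M} (hv : v ∈ W) : a • v ∈ W := by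
  have ha : a ∈ Algebra.adjoin R s := hs ▸ Algebra.mem_top
  induction ha using Algebra.adjoin_induction generalizing v with
  | mem a ha => exact hW a ha v hv
  | algebraMap r => rw [algebraMap_smul]; exact W.smul_mem r hv
  | add a b _ _ ha hb => rw [add_smul]; exact W.add_mem (ha hv) (hb hv)
  | mul a b _ _ ha hb => rw [mul_smul]; exact ha (hb hv)

theorem Submodule.smul_mem_of_forall_mem_span {R A M : Type*} [Semiring R] [Monoid A]
    [AddCommMonoid M] [Module R M] [DistribSMul A M] [SMulCommClass A R M]
    {a : A} {s : Set M} {W : Submodule R M} (h : ∀ x ∈ s, a • x ∈ W) {v : M}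
    (hv : v ∈ Submodule.span R s) : a • v ∈ W :=
  (Submodule.span_le (p := W.comap (DistribSMul.toLinearMap R M a))).mpr h hv

namespace Uq

section

variable (q : ℂ) (m : ℕ)

theorem Kgen_mul_Egen : Kgen q m * Egen q m = q ^ 2 • (Egen q m * Kgen q m) := by
  simpa only [map_mul, map_smul, Egen, Kgen] using
    RingQuot.mkAlgHom_rel ℂ (UqRel.KE (q := q) (m := m))

theorem Kgen_mul_Fgen : Kgen q m * Fgen q m = (q ^ 2)⁻¹ • (Fgen q m * Kgen q m) := by
  simpa only [map_mul, map_smul, Fgen, Kgen] using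
    RingQuot.mkAlgHom_rel ℂ (UqRel.KF (q := q) (m := m))

theorem Kgen_mul_Kinvgen : Kgen q m * Kinvgen q m = 1 := by
  simpa only [map_mul, map_one, Kgen, Kinvgen] using
    RingQuot.mkAlgHom_rel ℂ (UqRel.KKinv (q := q) (m := m))

theorem Kinvgen_mul_Kgen : Kinvgen q m * Kgen q m = 1 := by
  simpa only [map_mul, map_one, Kgen, Kinvgen] using
    RingQuot.mkAlgHom_rel ℂ (UqRel.KinvK (q := q) (m := m))

def Kunit : (Uq q m)ˣ := ⟨Kgen q m, Kinvgen q m, Kgen_mul_Kinvgen q m, Kinvgen_mul_Kgen q m⟩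

theorem Kzpow_eq_Kunit_zpow (n : ℤ) : Kzpow q m n = ↑(Kunit q m ^ n) := by
  unfold Kzpow lpow
  split_ifs with hn
  · lift n to ℕ using hn
    rw [zpow_natCast, Units.val_pow_eq_pow_val, Int.toNat_natCast]
    rfl
  · obtain ⟨k, rfl⟩ : ∃ k : ℕ, n = -k := ⟨(-n).toNat, by omega⟩
    rw [zpow_neg, zpow_natCast, ← inv_pow, Units.val_pow_eq_pow_val, neg_neg, Int.toNat_natCast]
    rfl

theorem Kzpow_add (a b : ℤ) : Kzpow q m (a + b) = Kzpow q m a * Kzpow q m b := by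
  simp only [Kzpow_eq_Kunit_zpow, zpow_add, Units.val_mul]

theorem Kzpow_zero : Kzpow q m 0 = 1 := by
  rw [Kzpow_eq_Kunit_zpow, zpow_zero, Units.val_one]

theorem Kzpow_one : Kzpow q m 1 = Kgen q m := by
  rw [Kzpow_eq_Kunit_zpow, zpow_one]; rfl

theorem Kzpow_neg_one : Kzpow q m (-1) = Kinvgen q m := by
  rw [Kzpow_eq_Kunit_zpow, zpow_neg_one]; rfl

theorem Kzpow_natCast (k : ℕ) : Kzpow q m k = Kgen q m ^ k := by
  rw [Kzpow_eq_Kunit_zpow, zpow_natCast, Units.val_pow_eq_pow_val]; rfl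

theorem Kzpow_neg_natCast (k : ℕ) : Kzpow q m (-k) = Kinvgen q m ^ k := by
  rw [Kzpow_eq_Kunit_zpow, zpow_neg, zpow_natCast, ← inv_pow, Units.val_pow_eq_pow_val]; rfl

variable {q} in
theorem Egen_mul_Kzpow (hq0 : q ≠ 0) (n : ℤ) :
    Egen q m * Kzpow q m n = (q ^ 2)⁻¹ ^ n • (Kzpow q m n * Egen q m) := by
  rw [Kzpow_eq_Kunit_zpow]
  refine Units.mul_zpow_eq_smul_zpow_mul (inv_ne_zero (pow_ne_zero 2 hq0)) ?_ n
  rw [show (Kunit q m : Uq q m) = Kgen q m from rfl, Kgen_mul_Egen, smul_smul,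
    inv_mul_cancel₀ (pow_ne_zero 2 hq0), one_smul]

variable {q} in
theorem Fgen_mul_Kzpow (hq0 : q ≠ 0) (n : ℤ) :
    Fgen q m * Kzpow q m n = (q ^ 2) ^ n • (Kzpow q m n * Fgen q m) := by
  rw [Kzpow_eq_Kunit_zpow]
  refine Units.mul_zpow_eq_smul_zpow_mul (pow_ne_zero 2 hq0) ?_ n
  rw [show (Kunit q m : Uq q m) = Kgen q m from rfl, Kgen_mul_Fgen, smul_smul,
    mul_inv_cancel₀ (pow_ne_zero 2 hq0), one_smul]

theorem adjoin_generators :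
    Algebra.adjoin ℂ (Set.range fun g => RingQuot.mkAlgHom ℂ (UqRel q m) (FreeAlgebra.ι ℂ g)) =
      ⊤ := by
  rw [Set.range_comp' (RingQuot.mkAlgHom ℂ (UqRel q m)), Algebra.adjoin_image,
    FreeAlgebra.adjoin_range_ι, Algebra.map_top, AlgHom.range_eq_top]
  exact RingQuot.mkAlgHom_surjective ℂ (UqRel q m)

end

section

open Submodule

variable {q : ℂ} {m : ℕ} {V : Type*} [AddCommGroup V] [Module (Uq q m) V] {w : V}

theorem Kzpow_smul_ne_zero (hw0 : w ≠ 0) (i : ℤ) : Kzpow q m i • w ≠ 0 := by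
  rw [Kzpow_eq_Kunit_zpow, ← Units.smul_def]
  exact (smul_ne_zero_iff_ne _).mpr hw0

variable [Module ℂ V] [IsScalarTower ℂ (Uq q m) V]

theorem Egen_smul_Kzpow_smul (hq0 : q ≠ 0) {e : ℂ} (hw : Egen q m • w = e • w) (i : ℤ) :
    Egen q m • Kzpow q m i • w = (e * (q ^ 2)⁻¹ ^ i) • Kzpow q m i • w := by
  rw [← mul_smul, Egen_mul_Kzpow m hq0, smul_assoc, mul_smul, hw,
    smul_comm (Kzpow q m i) e, smul_smul, mul_comm]

theorem linearIndependent_Kzpow_smul (hq0 : q ≠ 0) (hq : ∀ k : ℕ, 0 < k → q ^ k ≠ 1) {e : ℂ}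
    (he : e ≠ 0) (hw : Egen q m • w = e • w) (hw0 : w ≠ 0) :
    LinearIndependent ℂ fun i : ℤ => Kzpow q m i • w := by
  have hq2 : ∀ k : ℕ, 0 < k → (q ^ 2)⁻¹ ^ k ≠ 1 := fun k hk h1 =>
    hq (2 * k) (by omega) (by rwa [inv_pow, inv_eq_one, ← pow_mul] at h1)
  exact Module.End.eigenvectors_linearIndependent' (DistribSMul.toLinearMap ℂ V (Egen q m))
    (fun i => e * (q ^ 2)⁻¹ ^ i)
    ((mul_right_injective₀ he).comp (injective_zpow_of_pow_ne_one (by simpa using hq0) hq2)) _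
    fun i => ⟨Module.End.mem_eigenspace_iff.mpr (Egen_smul_Kzpow_smul hq0 hw i),
      Kzpow_smul_ne_zero hw0 i⟩

theorem Kzpow_smul_mem_span (j : ℤ) {v : V}
    (hv : v ∈ span ℂ (Set.range fun i : ℤ => Kzpow q m i • w)) :
    Kzpow q m j • v ∈ span ℂ (Set.range fun i : ℤ => Kzpow q m i • w) := by
  refine smul_mem_of_forall_mem_span ?_ hv
  rintro _ ⟨i, rfl⟩
  rw [← mul_smul, ← Kzpow_add]
  exact subset_span ⟨j + i, rfl⟩

theorem Fgen_smul_Kzpow_smul_mem_span (hq0 : q ≠ 0) {e : ℂ} (he : e ≠ 0)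
    (hw : Egen q m • w = e • w) {χ : ℂ} (hχ : Casimir q m • w = χ • w) (i : ℤ) :
    Fgen q m • Kzpow q m i • w ∈ span ℂ (Set.range fun i : ℤ => Kzpow q m i • w) := by
  set W := span ℂ (Set.range fun i : ℤ => Kzpow q m i • w)
  have hmem (j : ℤ) : Kzpow q m j • w ∈ W := subset_span ⟨j, rfl⟩
  set c := ((q ^ (2 * m) - 1) * (q - q⁻¹))⁻¹
  have hFw : e • Fgen q m • w =
      χ • Kzpow q m 0 • w - (c * q ^ (2 * m)) • Kzpow q m m • w - c • Kzpow q m (-m) • w := by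
    rw [Kzpow_zero, one_smul, ← hχ, Casimir, add_smul, add_smul, mul_smul, hw, smul_comm,
      smul_assoc, smul_assoc, Kzpow_natCast, Kzpow_neg_natCast]
    abel
  have hFw_mem : Fgen q m • w ∈ W := by
    refine (W.smul_mem_iff he).mp ?_
    rw [hFw]
    exact W.sub_mem (W.sub_mem (W.smul_mem _ (hmem 0)) (W.smul_mem _ (hmem m)))
      (W.smul_mem _ (hmem (-m)))
  rw [← mul_smul, Fgen_mul_Kzpow m hq0, smul_assoc, mul_smul]
  exact W.smul_mem _ (Kzpow_smul_mem_span i hFw_mem)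

theorem span_Kzpow_smul_eq_top (hq0 : q ≠ 0) {e : ℂ} (he : e ≠ 0)
    (hw : Egen q m • w = e • w) {χ : ℂ} (hχ : Casimir q m • w = χ • w)
    (hcyc : ∀ v : V, ∃ u : Uq q m, v = u • w) :
    span ℂ (Set.range fun i : ℤ => Kzpow q m i • w) = ⊤ := by
  set W := span ℂ (Set.range fun i : ℤ => Kzpow q m i • w)
  have hmem (j : ℤ) : Kzpow q m j • w ∈ W := subset_span ⟨j, rfl⟩
  have hgen : ∀ a ∈ Set.range fun g => RingQuot.mkAlgHom ℂ (UqRel q m) (FreeAlgebra.ι ℂ g),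
      ∀ v ∈ W, a • v ∈ W := by
    rintro _ ⟨g, rfl⟩ v hv
    refine smul_mem_of_forall_mem_span ?_ hv
    rintro _ ⟨i, rfl⟩
    cases g with
    | E =>
      change Egen q m • _ ∈ W
      rw [Egen_smul_Kzpow_smul hq0 hw]
      exact W.smul_mem _ (hmem i)
    | F => exact Fgen_smul_Kzpow_smul_mem_span hq0 he hw hχ i
    | K =>
      change Kgen q m • _ ∈ W
      rw [← Kzpow_one]
      exact Kzpow_smul_mem_span 1 (hmem i)
    | Kinv =>
      change Kinvgen q m • _ ∈ W
      rw [← Kzpow_neg_one]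
      exact Kzpow_smul_mem_span (-1) (hmem i)
  refine eq_top_iff.mpr fun v _ => ?_
  obtain ⟨u, rfl⟩ := hcyc v
  refine smul_mem_of_adjoin_eq_top (adjoin_generators q m) W hgen u ?_
  simpa only [Kzpow_zero, one_smul] using hmem 0

end

end Uq

theorem stmt19_general (q : ℂ) (m : ℕ) (hq0 : q ≠ 0)
    (hq : ∀ k : ℕ, 0 < k → q ^ k ≠ 1)
    (e : ℂ) (he : e ≠ 0)
    (V : Type) [AddCommGroup V] [Module ℂ V] [Module (Uq q m) V]
    [IsScalarTower ℂ (Uq q m) V]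
    (w : V) (hw0 : w ≠ 0)
    (hw : Egen q m • w = algebraMap ℂ (Uq q m) e • w)
    (hcyc : ∀ v : V, ∃ u : Uq q m, v = u • w)
    (hχ : ∃ χ : ℂ, ∀ v : V, Casimir q m • v = algebraMap ℂ (Uq q m) χ • v) :
    ∃ b : Module.Basis ℤ ℂ V, ∀ i : ℤ, b i = Kzpow q m i • w := by
  obtain ⟨χ, hχ⟩ := hχ
  rw [algebraMap_smul] at hw
  have hχw : Casimir q m • w = χ • w := by rw [hχ, algebraMap_smul]
  have hli := Uq.linearIndependent_Kzpow_smul hq0 hq he hw hw0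
  have hspan := Uq.span_Kzpow_smul_eq_top hq0 he hw hχw hcyc
  exact ⟨.mk hli hspan.ge, Module.Basis.mk_apply hli hspan.ge⟩

/-- Let `(V, w)` be an irreducible Whittaker module for `U_q(f_m(K))`
admitting a central character (i.e. the Casimir `Ω` acts by a scalar). Then the set
`{K^i w : i ∈ ℤ}` is a `ℂ`-basis of `V`. -/
theorem stmt19 (q : ℂ) (m : ℕ) (hm : 1 ≤ m) (hq0 : q ≠ 0)
    (hq : ∀ k : ℕ, 0 < k → q ^ k ≠ 1)
    (e : ℂ) (he : e ≠ 0)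
    (V : Type) [AddCommGroup V] [Module ℂ V] [Module (Uq q m) V]
    [IsScalarTower ℂ (Uq q m) V]
    (w : V) (hw0 : w ≠ 0)
    (hw : Egen q m • w = algebraMap ℂ (Uq q m) e • w)
    (hcyc : ∀ v : V, ∃ u : Uq q m, v = u • w)
    (hirr : IsSimpleModule (Uq q m) V)
    (hχ : ∃ χ : ℂ, ∀ v : V, Casimir q m • v = algebraMap ℂ (Uq q m) χ • v) :
    ∃ b : Module.Basis ℤ ℂ V, ∀ i : ℤ, b i = Kzpow q m i • w :=
  stmt19_general q m hq0 hq e he V w hw0 hw hcyc hχ
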